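/- arXiv:0812.2674 — 5 statements merged into one kernel-verified Lean document; each statement's English description precedes it below -/
import Mathlib

section
/- For all real x in (0,2) with x ≥ 2e/q² and integer q ≥ 3, the function f(x) = x - h(x/2)·log_q(2) is nonnegative, where h is the binary entropy function h(y) = -y·log₂(y) - (1-y)·log₂(1-y). -/
open Real

noncomputable def binEnt (y : ℝ) : ℝ := -(y * Real.logb 2 y) - (1 - y) * Real.logb 2 (1 - y)

/-!
Passing to natural logarithms, `h(y) log 2` is Mathlib's `binEntropy y`. Since
`-(1 - y) log (1 - y) ≤ y`, the entropy is at most `y (1 - log y)`, and the hypothesis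
`y = x / 2 ≥ e / q²` says exactly that `1 - log y ≤ 2 log q`.
-/

theorem binEnt_mul_log_two (y : ℝ) : binEnt y * log 2 = binEntropy y := by
  have hlog2 : log 2 ≠ 0 := (log_pos one_lt_two).ne'
  rw [binEntropy_eq_negMulLog_add_negMulLog_one_sub, negMulLog, negMulLog, binEnt, logb, logb]
  field_simp
  ring

theorem binEntropy_le_mul_one_sub_log {y : ℝ} (hy : y ≤ 1) :
    binEntropy y ≤ y * (1 - log y) := by
  have h := self_sub_one_le_mul_log (sub_nonneg.mpr hy)
  rw [binEntropy_eq_negMulLog_add_negMulLog_one_sub, negMulLog, negMulLog]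
  linarith

theorem one_sub_log_le_two_mul_log {y q : ℝ} (hy : 0 < y) (hq : 0 < q)
    (h : exp 1 / q ^ 2 ≤ y) : 1 - log y ≤ 2 * log q := by
  have hexp : exp 1 ≤ y * q ^ 2 := (div_le_iff₀ (by positivity)).mp h
  have hlog := log_le_log (exp_pos 1) hexp
  rw [log_exp, log_mul hy.ne' (by positivity), log_pow] at hlog
  push_cast at hlog
  linarith

theorem stmt_0 (q : ℤ) (hq : 3 ≤ q) (x : ℝ) (hx0 : 0 < x) (hx2 : x < 2)
    (hxe : 2 * Real.exp 1 / (q : ℝ) ^ 2 ≤ x) :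
    0 ≤ x - binEnt (x / 2) * (Real.log 2 / Real.log (q : ℝ)) := by
  have hq3 : (3 : ℝ) ≤ q := by exact_mod_cast hq
  have hlogq : 0 < log q := log_pos (by linarith)
  have hy : exp 1 / (q : ℝ) ^ 2 ≤ x / 2 := by
    rw [mul_div_assoc] at hxe
    linarith
  have hentropy : binEntropy (x / 2) ≤ x * log q :=
    calc binEntropy (x / 2) ≤ x / 2 * (1 - log (x / 2)) :=
          binEntropy_le_mul_one_sub_log (by linarith)
      _ ≤ x / 2 * (2 * log q) := by
          gcongr
          exact one_sub_log_le_two_mul_log (by positivity) (by positivity) hy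
      _ = x * log q := by ring
  rw [sub_nonneg, ← mul_div_assoc, binEnt_mul_log_two, div_le_iff₀ hlogq]
  exact hentropy
end

section
/- Let q ≥ 3 and n ≥ 1 be integers, δ a real number with 2e/q² ≤ δ ≤ 1, and t a natural number with t/n ≤ δ/2 + 1/(2n) and t ≤ n/4. Then h(t/n)·log_q(2) + (t/n)·log_q(1 - q^{-2}) - 1/n ≤ δ, where h is the binary entropy function (h(0)=0). -/
/-!
In natural units, `h(x) log_q 2 = H(x) / log q` with `H = binEntropy`. Using
`-(1 - x) log (1 - x) ≤ x`, we get `H(x) ≤ x - x log x`, and `x - x log x` is increasing on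
`[0, 1]`, so for `x = t/n ≤ s := δ/2 + 1/(2n) ≤ 1` it is at most `s - s log s`. Since
`s ≥ e/q²`, `log s ≥ 1 - 2 log q`, hence `s - s log s ≤ 2 s log q`, and dividing by `log q`
gives `2 s = δ + 1/n`. The term with `log_q (1 - q⁻²)` is nonpositive.
-/

open Real

theorem binEnt_mul_logb (b x : ℝ) : binEnt x * logb b 2 = binEntropy x / log b := by
  have hlog2 : log 2 ≠ 0 := (log_pos one_lt_two).ne'
  simp only [binEnt, logb, binEntropy, log_inv]
  field_simp
  ring

namespace Real

theorem binEntropy_le_self_add_negMulLog {x : ℝ} (hx : x ≤ 1) :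
    binEntropy x ≤ x + negMulLog x := by
  have := negMulLog_le_one_sub_self (sub_nonneg.2 hx)
  rw [binEntropy_eq_negMulLog_add_negMulLog_one_sub]
  linarith

theorem monotoneOn_self_add_negMulLog :
    MonotoneOn (fun x ↦ x + negMulLog x) (Set.Icc 0 1) := by
  have hderiv : ∀ x ∈ Set.Ioo (0 : ℝ) 1, HasDerivAt (fun x ↦ x + negMulLog x) (-log x) x :=
    fun x hx ↦ by
      have h : HasDerivAt (fun x ↦ x + negMulLog x) (1 + (-log x - 1)) x :=
        (hasDerivAt_id' x).add (hasDerivAt_negMulLog hx.1.ne')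
      rwa [add_sub_cancel] at h
  refine monotoneOn_of_deriv_nonneg (convex_Icc 0 1) (by fun_prop) ?_ ?_ <;> rw [interior_Icc]
  · exact fun x hx ↦ (hderiv x hx).differentiableAt.differentiableWithinAt
  · exact fun x hx ↦ (hderiv x hx).deriv ▸ neg_nonneg.2 (log_nonpos hx.1.le hx.2.le)

theorem self_add_negMulLog_le_mul_log {c s : ℝ} (hc : 0 < c) (hs : exp 1 / c ≤ s) :
    s + negMulLog s ≤ s * log c := by
  have hs0 : 0 < s := (by positivity : 0 < exp 1 / c).trans_le hs
  have hlog : 1 - log c ≤ log s := by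
    rw [← log_exp 1, ← log_div (exp_pos 1).ne' hc.ne']
    exact log_le_log (by positivity) hs
  rw [negMulLog]
  nlinarith

theorem logb_one_sub_inv_sq_nonpos {b : ℝ} (hb : 1 < b) : logb b (1 - b⁻¹ ^ 2) ≤ 0 := by
  have hinv : b⁻¹ ^ 2 ≤ 1 := pow_le_one₀ (by positivity) (inv_le_one_of_one_le₀ hb.le)
  exact logb_nonpos hb (by linarith) (sub_le_self _ (by positivity))

end Real

theorem stmt_5_general (q n : ℤ) (hq : 3 ≤ q) (hn : 1 ≤ n) (δ : ℝ)
    (hδ1 : 2 * Real.exp 1 / (q : ℝ) ^ 2 ≤ δ) (hδ2 : δ ≤ 1)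
    (t : ℕ) (ht : (t : ℝ) / n ≤ δ / 2 + 1 / (2 * n)) :
    binEnt ((t : ℝ) / n) * Real.logb q 2 + ((t : ℝ) / n) * Real.logb q (1 - (q : ℝ)⁻¹ ^ 2)
      - 1 / n ≤ δ := by
  have hq1 : (1 : ℝ) < q := by exact_mod_cast (by omega : 1 < q)
  have hn1 : (1 : ℝ) ≤ n := by exact_mod_cast hn
  set x := (t : ℝ) / n
  set s := δ / 2 + 1 / (2 * n) with hs
  have hx : 0 ≤ x := by positivity
  have hs1 : s ≤ 1 := by
    have : 1 / (2 * (n : ℝ)) ≤ 1 / 2 := by gcongr; linarith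
    linarith
  have hes : exp 1 / (q : ℝ) ^ 2 ≤ s := by
    have : 0 < 1 / (2 * (n : ℝ)) := by positivity
    have : exp 1 / (q : ℝ) ^ 2 = (2 * exp 1 / (q : ℝ) ^ 2) / 2 := by ring
    linarith
  have hlogq : 0 < log q := log_pos hq1
  have hentropy : binEnt x * logb q 2 ≤ δ + 1 / n := calc
    binEnt x * logb q 2 = binEntropy x / log q := binEnt_mul_logb _ _
    _ ≤ (x + negMulLog x) / log q := by
      gcongr ?_ / _
      exact binEntropy_le_self_add_negMulLog (ht.trans hs1)
    _ ≤ (s + negMulLog s) / log q := by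
      gcongr ?_ / _
      exact monotoneOn_self_add_negMulLog ⟨hx, ht.trans hs1⟩ ⟨hx.trans ht, hs1⟩ ht
    _ ≤ s * log ((q : ℝ) ^ 2) / log q := by
      gcongr ?_ / _
      exact self_add_negMulLog_le_mul_log (by positivity) hes
    _ = δ + 1 / n := by rw [log_pow, hs]; field_simp; ring
  have hsecond : x * logb q (1 - (q : ℝ)⁻¹ ^ 2) ≤ 0 :=
    mul_nonpos_of_nonneg_of_nonpos hx (logb_one_sub_inv_sq_nonpos hq1)
  linarith

theorem stmt_5 (q n : ℤ) (hq : 3 ≤ q) (hn : 1 ≤ n) (δ : ℝ)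
    (hδ1 : 2 * Real.exp 1 / (q : ℝ) ^ 2 ≤ δ) (hδ2 : δ ≤ 1)
    (t : ℕ) (ht : (t : ℝ) / n ≤ δ / 2 + 1 / (2 * n)) (ht' : (t : ℝ) ≤ n / 4) :
    binEnt ((t : ℝ) / n) * Real.logb q 2 + ((t : ℝ) / n) * Real.logb q (1 - (q : ℝ)⁻¹ ^ 2)
      - 1 / n ≤ δ :=
  stmt_5_general q n hq hn δ hδ1 hδ2 t ht
end

section
/- Let q ≥ 3 be an integer and n, K, d positive integers with K > 1 satisfying the quantum Singleton bound log_q K ≤ n - 2d + 2, and suppose log_q K + d ≤ (1 - δ)n where δ = 2e/q². Let t = ⌊(d-1)/2⌋. Then K ≤ q^n / (Σ_{j=0}^{t} binomial(n,j)·(q²-1)^j). -/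
/-!
Write `V = ∑_{j ≤ t} C(n, j) (q² - 1)^j`. For `0 < s ≤ 1` the Chernoff trick gives
`V s^t ≤ (1 + (q² - 1) s)^n`, and the choice `s = e / (q² (q² - 1))` yields
`log V ≤ t (4 log q - 1) + n e / q²`. Since `2t + 1 ≤ d`, this exponent is at most
`n log q - log K` once the Singleton bound and the rate hypothesis are averaged with
suitable weights, i.e. `K V ≤ q^n`.
-/

open Real Finset

theorem sum_range_choose_mul_pow_le_one_add_pow {R : Type*} [CommSemiring R] [PartialOrder R]
    [IsOrderedRing R] {y : R} (hy : 0 ≤ y) (n t : ℕ) :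
    ∑ j ∈ range (t + 1), (n.choose j : R) * y ^ j ≤ (1 + y) ^ n := by
  have hsub : range (n + 1) ⊆ range (max t n + 1) := range_subset_range.mpr (by omega)
  calc ∑ j ∈ range (t + 1), (n.choose j : R) * y ^ j
      ≤ ∑ j ∈ range (max t n + 1), (n.choose j : R) * y ^ j :=
        sum_le_sum_of_subset_of_nonneg (range_subset_range.mpr (by omega))
          fun _ _ _ ↦ by positivity
    _ = ∑ j ∈ range (n + 1), (n.choose j : R) * y ^ j := by
        refine (sum_subset hsub fun j _ hj ↦ ?_).symm
        rw [Nat.choose_eq_zero_of_lt (by simpa using hj), Nat.cast_zero, zero_mul]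
    _ = (1 + y) ^ n := by
        rw [add_comm 1 y, add_pow]
        exact sum_congr rfl fun j _ ↦ by rw [one_pow, mul_one, mul_comm]

theorem one_le_sum_range_choose_mul_pow {R : Type*} [CommSemiring R] [PartialOrder R]
    [IsOrderedRing R] {y : R} (hy : 0 ≤ y) (n t : ℕ) :
    1 ≤ ∑ j ∈ range (t + 1), (n.choose j : R) * y ^ j := by
  simpa using single_le_sum (f := fun j ↦ (n.choose j : R) * y ^ j)
    (fun _ _ ↦ by positivity) (mem_range.mpr t.succ_pos)

/-- Chernoff-type tail bound: weighting the `j`-th term by `s ^ (t - j) ≥ 1` compares the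
truncated sum with the full binomial expansion of `(1 + x s) ^ n`. -/
theorem sum_range_choose_mul_pow_mul_pow_le {R : Type*} [CommSemiring R] [PartialOrder R]
    [IsOrderedRing R] {x s : R} (hx : 0 ≤ x) (hs₀ : 0 ≤ s) (hs₁ : s ≤ 1) (n t : ℕ) :
    (∑ j ∈ range (t + 1), (n.choose j : R) * x ^ j) * s ^ t ≤ (1 + x * s) ^ n := by
  calc (∑ j ∈ range (t + 1), (n.choose j : R) * x ^ j) * s ^ t
      ≤ ∑ j ∈ range (t + 1), (n.choose j : R) * (x * s) ^ j := by
        rw [sum_mul]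
        refine sum_le_sum fun j hj ↦ ?_
        rw [mul_pow, ← mul_assoc]
        exact mul_le_mul_of_nonneg_left
          (pow_le_pow_of_le_one hs₀ hs₁ (Nat.lt_succ_iff.mp (mem_range.mp hj))) (by positivity)
    _ ≤ (1 + x * s) ^ n := sum_range_choose_mul_pow_le_one_add_pow (by positivity) n t

theorem log_sum_range_choose_mul_sq_sub_one_pow_le {q : ℝ} (hq : 2 ≤ q) (n t : ℕ) :
    log (∑ j ∈ range (t + 1), (n.choose j : ℝ) * (q ^ 2 - 1) ^ j)
      ≤ t * (4 * log q - 1) + n * exp 1 / q ^ 2 := by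
  set x := q ^ 2 - 1
  have hx₀ : 0 < x := by nlinarith
  set s := exp 1 / (q ^ 2 * x)
  have hs₀ : 0 < s := by positivity
  have hs₁ : s ≤ 1 := by
    rw [div_le_one (by positivity)]
    nlinarith [exp_one_lt_d9]
  have hS := one_le_sum_range_choose_mul_pow hx₀.le n t
  have hchernoff := log_le_log (by positivity)
    (sum_range_choose_mul_pow_mul_pow_le hx₀.le hs₀.le hs₁ n t)
  rw [log_mul (by positivity) (by positivity), log_pow, log_pow] at hchernoff
  have hxs : x * s = exp 1 / q ^ 2 := by simp only [s]; field_simp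
  have hlog_one_add : log (1 + x * s) ≤ exp 1 / q ^ 2 := by
    linarith [log_le_sub_one_of_pos (show 0 < 1 + x * s by positivity)]
  have hlog_s : -log s ≤ 4 * log q - 1 := by
    have hqx : log (q ^ 2 * x) ≤ log (q ^ 4) := log_le_log (by positivity) (by nlinarith)
    rw [log_div (by positivity) (by positivity), log_exp]
    rw [log_pow] at hqx
    push_cast at hqx
    linarith
  rw [mul_div_assoc]
  linarith [mul_le_mul_of_nonneg_left hlog_one_add n.cast_nonneg,
    mul_le_mul_of_nonneg_left hlog_s t.cast_nonneg]

/-- Averaging the two lower bounds on `A` with weights `1 - 1/(2L)` and `1/(2L)` gives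
`(2L - 1)(D - 1) + D/2 + B ≤ A`. -/
theorem mul_four_mul_sub_one_add_le_of_two_bounds {A B L D T : ℝ} (hL : 1 ≤ 2 * L)
    (hTD : 2 * T + 1 ≤ D) (hA₁ : (2 * D - 2) * L ≤ A) (hA₂ : D * L + 2 * B * L ≤ A) :
    T * (4 * L - 1) + B ≤ A := by
  have hinterp : 2 * L * ((2 * L - 1) * (D - 1) + D / 2 + B) ≤ 2 * L * A := by
    nlinarith [mul_le_mul_of_nonneg_left hA₁ (show 0 ≤ 2 * L - 1 by linarith)]
  have hA : (2 * L - 1) * (D - 1) + D / 2 + B ≤ A := le_of_mul_le_mul_left hinterp (by linarith)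
  nlinarith [mul_le_mul_of_nonneg_left hTD (show 0 ≤ 4 * L - 1 by linarith)]

theorem stmt_7_general (q n K d : ℕ) (hq : 3 ≤ q) (hK : 1 < K) (hd : 0 < d)
    (hSingleton : Real.logb q K ≤ (n : ℝ) - 2 * d + 2)
    (hkd : Real.logb q K + d ≤ (1 - 2 * Real.exp 1 / (q : ℝ) ^ 2) * n)
    (t : ℕ) (ht : t = (d - 1) / 2) :
    (K : ℝ) ≤ (q : ℝ) ^ n / ∑ j ∈ Finset.range (t + 1),
      (n.choose j : ℝ) * ((q : ℝ) ^ 2 - 1) ^ j := by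
  have hq₃ : (3 : ℝ) ≤ q := by exact_mod_cast hq
  have hK₀ : (0 : ℝ) < K := Nat.cast_pos.mpr (by omega)
  have hL : 1 ≤ log q := by
    rw [← log_exp 1]
    exact log_le_log (exp_pos 1) (by linarith [exp_one_lt_d9])
  have hS : 0 < ∑ j ∈ range (t + 1), (n.choose j : ℝ) * ((q : ℝ) ^ 2 - 1) ^ j :=
    zero_lt_one.trans_le (one_le_sum_range_choose_mul_pow (by nlinarith) n t)
  rw [le_div_iff₀ hS, ← log_le_log_iff (by positivity) (by positivity), log_mul hK₀.ne' hS.ne',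
    log_pow]
  rw [logb, div_add' _ _ _ (by positivity), div_le_iff₀ (by positivity)] at hkd
  rw [logb, div_le_iff₀ (by positivity)] at hSingleton
  have htd : 2 * (t : ℝ) + 1 ≤ d := by exact_mod_cast (show 2 * t + 1 ≤ d by omega)
  have hexponent := mul_four_mul_sub_one_add_le_of_two_bounds (A := n * log q - log K)
    (B := n * exp 1 / q ^ 2) (L := log q) (by linarith) htd (by linarith)
    (by linear_combination hkd)
  linarith [log_sum_range_choose_mul_sq_sub_one_pow_le (by linarith : (2 : ℝ) ≤ q) n t]

theorem stmt_7 (q n K d : ℕ) (hq : 3 ≤ q) (hn : 0 < n) (hK : 1 < K) (hd : 0 < d)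
    (hSingleton : Real.logb q K ≤ (n : ℝ) - 2 * d + 2)
    (hkd : Real.logb q K + d ≤ (1 - 2 * Real.exp 1 / (q : ℝ) ^ 2) * n)
    (t : ℕ) (ht : t = (d - 1) / 2) :
    (K : ℝ) ≤ (q : ℝ) ^ n / ∑ j ∈ Finset.range (t + 1),
      (n.choose j : ℝ) * ((q : ℝ) ^ 2 - 1) ^ j :=
  stmt_7_general q n K d hq hK hd hSingleton hkd t ht
end

section
/- Let C₁ ⊂ C₂ ⊆ F_q^n be linear codes over a finite field F_q with dim C₁ = k₁ and dim C₂ = k₁ + k, k ≥ 1, and suppose every codeword in C₂ \ C₁ has Hamming weight at least d. Then there exists a linear [n - k₁, k] code over F_q with minimum distance at least d. -/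
open Finset
open Module Function

/-!
Choose an information set `S` of `C₁`: `#S = k₁` coordinates on which no nonzero codeword of
`C₁` vanishes identically. Shortening `C₂` on `S`, i.e. keeping the codewords of `C₂` that vanish
on `S` and deleting those coordinates, gives a code of length `n - k₁` whose dimension is at least
`(k₁ + k) + (n - k₁) - n = k`; take any `k`-dimensional subcode. Its nonzero words extend by zero to words of `C₂` of the same
weight that cannot lie in `C₁`, so they have weight at least `d`.
-/

section

variable {F : Type*} [Field F]

theorem finrank_add_finrank_le_finrank_comap_add {V W : Type*} [AddCommGroup V] [Module F V]
    [FiniteDimensional F V] [AddCommGroup W] [Module F W] [FiniteDimensional F W]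
    (f : V →ₗ[F] W) (C : Submodule F W) :
    finrank F V + finrank F C ≤ finrank F (C.comap f) + finrank F W := by
  have hker : C.comap f = LinearMap.ker (C.mkQ ∘ₗ f) := by
    rw [LinearMap.ker_comp, Submodule.ker_mkQ]
  have h_range : finrank F (LinearMap.range (C.mkQ ∘ₗ f)) ≤ finrank F (W ⧸ C) :=
    Submodule.finrank_le _
  have h_rank_nullity := LinearMap.finrank_range_add_finrank_ker (C.mkQ ∘ₗ f)
  have h_quotient := C.finrank_quotient_add_finrank
  rw [hker]
  omega

theorem Submodule.exists_le_finrank_eq {M : Type*} [AddCommGroup M] [Module F M]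
    (D : Submodule F M) [FiniteDimensional F D] {k : ℕ} (hk : k ≤ finrank F D) :
    ∃ D' ≤ D, finrank F D' = k := by
  obtain ⟨f, hf⟩ := (finrank_le_iff_exists_linearMap (R := F) (M := Fin k → F) (M' := D)).mp
    (by rwa [finrank_fin_fun])
  refine ⟨LinearMap.range (D.subtype ∘ₗ f), ?_, ?_⟩
  · rw [LinearMap.range_comp]
    exact Submodule.map_subtype_le D _
  · rw [LinearMap.finrank_range_of_inj (D.injective_subtype.comp hf :)]
    simp

theorem hammingNorm_extend_zero {κ ι β : Type*} [Fintype κ] [Fintype ι] [Zero β] [DecidableEq β]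
    {e : κ → ι} (he : Injective e) (u : κ → β) :
    hammingNorm (extend e u 0) = hammingNorm u := by
  classical
  unfold hammingNorm
  rw [← Finset.card_map ⟨e, he⟩]
  congr 1
  ext i
  by_cases hi : ∃ a, e a = i
  · obtain ⟨a, rfl⟩ := hi
    simp [he.extend_apply]
  · simp [not_exists.mp hi]

theorem Submodule.span_range_proj_comp_subtype {ι : Type*} [Fintype ι] (V : Submodule F (ι → F)) :
    Submodule.span F (Set.range fun i => (LinearMap.proj i : (ι → F) →ₗ[F] F) ∘ₗ V.subtype) = ⊤ := by
  set Φ := Submodule.span F (Set.range fun i => (LinearMap.proj i : (ι → F) →ₗ[F] F) ∘ₗ V.subtype)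
  have hΦ : Φ.dualCoannihilator = ⊥ := by
    refine (Submodule.eq_bot_iff _).mpr fun x hx => Subtype.ext (funext fun i => ?_)
    exact (Submodule.mem_dualCoannihilator x).mp hx _ (Submodule.subset_span ⟨i, rfl⟩)
  apply Submodule.eq_top_of_finrank_eq
  have h_dim := Subspace.finrank_add_finrank_dualCoannihilator_eq Φ
  rw [hΦ, finrank_bot, add_zero] at h_dim
  rw [h_dim, Subspace.dual_finrank_eq]

theorem Submodule.exists_informationSet {ι : Type*} [Fintype ι] (V : Submodule F (ι → F)) :
    ∃ S : Finset ι, #S = finrank F V ∧ ∀ v ∈ V, (∀ i ∈ S, v i = 0) → v = 0 := by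
  classical
  set φ := fun i => (LinearMap.proj i : (ι → F) →ₗ[F] F) ∘ₗ V.subtype
  obtain ⟨κ, a, ha, hspan, hli⟩ := exists_linearIndependent' F φ
  rw [V.span_range_proj_comp_subtype] at hspan
  have : Fintype κ := Fintype.ofInjective a ha
  refine ⟨univ.map ⟨a, ha⟩, ?_, fun v hv hvS => ?_⟩
  · rw [card_map, card_univ, ← finrank_span_eq_card hli, hspan, finrank_top,
      Subspace.dual_finrank_eq]
  · have hker : Submodule.span F (Set.range (φ ∘ a)) ≤ LinearMap.ker (Dual.eval F V ⟨v, hv⟩) := by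
      rw [Submodule.span_le]
      rintro _ ⟨j, rfl⟩
      exact hvS _ (Finset.mem_map_of_mem _ (mem_univ j))
    rw [hspan] at hker
    exact funext fun i => hker (Submodule.mem_top (x := φ i))

theorem Submodule.exists_shortening {ι κ : Type*} [Fintype ι] [Fintype κ] [DecidableEq F]
    (C₁ C₂ : Submodule F (ι → F)) (hκ : Fintype.card κ + finrank F C₁ = Fintype.card ι) :
    ∃ D : Submodule F (κ → F), finrank F C₂ ≤ finrank F C₁ + finrank F D ∧
      ∀ u ∈ D, u ≠ 0 → ∃ v ∈ C₂, v ∉ C₁ ∧ hammingNorm v = hammingNorm u := by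
  classical
  obtain ⟨S, hS, hSinj⟩ := C₁.exists_informationSet
  let e : κ ≃ ↥(Sᶜ : Finset ι) :=
    Fintype.equivOfCardEq (by rw [Fintype.card_coe, card_compl]; omega)
  set s : κ → ι := (↑) ∘ e
  have hs : Injective s := Subtype.val_injective.comp e.injective
  set E := ExtendByZero.linearMap F s
  refine ⟨C₂.comap E, ?_, fun u hu hu0 => ⟨E u, hu, fun hC₁ => hu0 ?_, hammingNorm_extend_zero hs u⟩⟩
  · have h_dim := finrank_add_finrank_le_finrank_comap_add E C₂
    rw [finrank_fintype_fun_eq_card, finrank_fintype_fun_eq_card] at h_dim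
    omega
  · have hEu : E u = 0 := hSinj _ hC₁ fun i hi => extend_apply' _ _ _ <| by
      rintro ⟨j, rfl⟩
      exact mem_compl.mp (e j).2 hi
    exact extend_injective hs (0 : ι → F) (hEu.trans (extend_zero s).symm)

end

theorem stmt_8_general (n k k₁ : ℕ) (F : Type) [Field F] [DecidableEq F]
    (C₁ C₂ : Submodule F (Fin n → F))
    (hk₁ : Module.finrank F C₁ = k₁) (hk₂ : Module.finrank F C₂ = k₁ + k)
    (d : ℕ) (hd : ∀ v ∈ C₂, v ∉ C₁ → d ≤ hammingNorm v) :
    ∃ D : Submodule F (Fin (n - k₁) → F), Module.finrank F D = k ∧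
      ∀ v ∈ D, v ≠ 0 → d ≤ hammingNorm v := by
  have hk₁n : k₁ ≤ n := hk₁ ▸ C₁.finrank_le.trans_eq (finrank_fin_fun F)
  obtain ⟨D, hD, hD_wt⟩ := C₁.exists_shortening (κ := Fin (n - k₁)) C₂ (by simp only [Fintype.card_fin]; omega)
  obtain ⟨D', hD'D, hD'⟩ := D.exists_le_finrank_eq (k := k) (by omega)
  refine ⟨D', hD', fun u hu hu0 => ?_⟩
  obtain ⟨v, hv₂, hv₁, hv⟩ := hD_wt u (hD'D hu) hu0
  exact hv ▸ hd v hv₂ hv₁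

theorem stmt_8 (q n k k₁ : ℕ) (F : Type) [Field F] [Fintype F] [DecidableEq F] (hF : Fintype.card F = q)
    (C₁ C₂ : Submodule F (Fin n → F)) (hsub : C₁ < C₂)
    (hk₁ : Module.finrank F C₁ = k₁) (hk₂ : Module.finrank F C₂ = k₁ + k) (hk : 1 ≤ k)
    (d : ℕ) (hd : ∀ v ∈ C₂, v ∉ C₁ → d ≤ hammingNorm v) :
    ∃ D : Submodule F (Fin (n - k₁) → F), Module.finrank F D = k ∧
      ∀ v ∈ D, v ≠ 0 → d ≤ hammingNorm v :=
  stmt_8_general n k k₁ F C₁ C₂ hk₁ hk₂ d hd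
end

section
/- Let n, k₁, k, j, q be positive integers with j ≥ 1 and suppose (ne/j)(q+1) ≤ ((n-k₁)/j)·((k+k₁)/j)·(q-1) (as real numbers, with j ≤ n-k₁ and j ≤ k+k₁). Then binomial(n, j)·(q²-1)^j ≤ binomial(n-k₁, j)·binomial(k+k₁, j)·(q-1)^{2j}. -/
open Finset in
lemma aux_nat_desc (m j : ℕ) (hjm : j ≤ m) :
    m ^ j * j.factorial ≤ j ^ j * m.descFactorial j := by
  have h1 : m ^ j * j.factorial = ∏ i ∈ range j, (m * (j - i)) := by
    rw [Finset.prod_mul_distrib, Finset.prod_const, card_range,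
      ← Nat.descFactorial_eq_prod_range, Nat.descFactorial_self]
  have h2 : j ^ j * m.descFactorial j = ∏ i ∈ range j, (j * (m - i)) := by
    rw [Finset.prod_mul_distrib, Finset.prod_const, card_range,
      ← Nat.descFactorial_eq_prod_range]
  rw [h1, h2]
  apply Finset.prod_le_prod'
  intro i hi
  simp only [Finset.mem_range] at hi
  have hji : j * i ≤ m * i := Nat.mul_le_mul_right i hjm
  have hcomm : m * j = j * m := Nat.mul_comm m j
  rw [Nat.mul_sub_left_distrib, Nat.mul_sub_left_distrib]
  omega

lemma aux_pow_le_choose (m j : ℕ) (hjm : j ≤ m) :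
    ((m : ℝ) / j) ^ j ≤ (m.choose j : ℝ) := by
  rcases Nat.eq_zero_or_pos j with rfl | hj
  · simp
  have hj0 : (0 : ℝ) < (j : ℝ) := by exact_mod_cast hj
  have hfac : (0 : ℝ) < (j.factorial : ℝ) := by exact_mod_cast j.factorial_pos
  rw [div_pow, div_le_iff₀ (pow_pos hj0 j)]
  have key : (m : ℝ) ^ j * j.factorial ≤ (j : ℝ) ^ j * m.descFactorial j := by
    exact_mod_cast aux_nat_desc m j hjm
  have hd : (m.descFactorial j : ℝ) = j.factorial * m.choose j := by
    exact_mod_cast congrArg (Nat.cast : ℕ → ℝ) (m.descFactorial_eq_factorial_mul_choose j)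
  rw [hd] at key
  nlinarith [pow_pos hj0 j]

lemma aux_pow_div_fac_le_exp (j : ℕ) : ((j : ℝ)) ^ j / j.factorial ≤ Real.exp j := by
  have h := Real.sum_le_exp_of_nonneg (x := (j : ℝ)) (by positivity) (j + 1)
  refine le_trans ?_ h
  exact Finset.single_le_sum (f := fun i => (j : ℝ) ^ i / (i.factorial : ℝ))
    (fun i _ => by positivity) (Finset.self_mem_range_succ j)

lemma aux_choose_le (m j : ℕ) (hj : 1 ≤ j) :
    (m.choose j : ℝ) ≤ ((m : ℝ) * Real.exp 1 / j) ^ j := by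
  have hj0 : (0 : ℝ) < (j : ℝ) := by exact_mod_cast hj
  have hfac : (0 : ℝ) < (j.factorial : ℝ) := by exact_mod_cast j.factorial_pos
  calc (m.choose j : ℝ) ≤ (m : ℝ) ^ j / j.factorial := Nat.choose_le_pow_div j m
    _ ≤ ((m : ℝ) * Real.exp 1 / j) ^ j := by
        rw [div_pow, mul_pow, div_le_div_iff₀ hfac (pow_pos hj0 j)]
        have hkey : ((j : ℝ)) ^ j ≤ Real.exp 1 ^ j * j.factorial := by
          rw [Real.exp_one_pow]
          have := aux_pow_div_fac_le_exp j
          rw [div_le_iff₀ hfac] at this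
          linarith
        calc (m : ℝ) ^ j * (j : ℝ) ^ j ≤ (m : ℝ) ^ j * (Real.exp 1 ^ j * j.factorial) :=
              mul_le_mul_of_nonneg_left hkey (by positivity)
          _ = (m : ℝ) ^ j * Real.exp 1 ^ j * j.factorial := by ring

theorem stmt_12 (n k₁ k j q : ℕ) (hn : 0 < n) (hk₁ : 0 < k₁) (hk : 0 < k) (hq : 0 < q)
    (hj : 1 ≤ j) (hj1 : j ≤ n - k₁) (hj2 : j ≤ k + k₁) (hk₁n : k₁ ≤ n)
    (h : (n : ℝ) * Real.exp 1 / j * ((q : ℝ) + 1) ≤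
      ((n : ℝ) - k₁) / j * (((k : ℝ) + k₁) / j) * ((q : ℝ) - 1)) :
    (n.choose j : ℝ) * ((q : ℝ) ^ 2 - 1) ^ j ≤
      ((n - k₁).choose j : ℝ) * ((k + k₁).choose j : ℝ) * ((q : ℝ) - 1) ^ (2 * j) := by
  have hq1 : (1 : ℝ) ≤ (q : ℝ) := by exact_mod_cast hq
  have hqm : (0 : ℝ) ≤ (q : ℝ) - 1 := by linarith
  have hjpos : (0 : ℝ) < (j : ℝ) := by exact_mod_cast hj
  have hcast : (((n - k₁ : ℕ)) : ℝ) = (n : ℝ) - k₁ := by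
    push_cast [Nat.cast_sub hk₁n]; ring
  have hbase : (n : ℝ) * Real.exp 1 / j * (((q : ℝ) + 1) * ((q : ℝ) - 1)) ≤
      ((n : ℝ) - k₁) / j * (((k : ℝ) + k₁) / j) * (((q : ℝ) - 1) * ((q : ℝ) - 1)) := by
    have := mul_le_mul_of_nonneg_right h hqm
    nlinarith
  have hbnn : (0 : ℝ) ≤ (n : ℝ) * Real.exp 1 / j * (((q : ℝ) + 1) * ((q : ℝ) - 1)) := by
    have h2 : (0:ℝ) ≤ (q : ℝ) + 1 := by linarith
    positivity
  have hpow : ((n : ℝ) * Real.exp 1 / j * (((q : ℝ) + 1) * ((q : ℝ) - 1))) ^ j ≤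
      (((n : ℝ) - k₁) / j * (((k : ℝ) + k₁) / j) * (((q : ℝ) - 1) * ((q : ℝ) - 1))) ^ j :=
    pow_le_pow_left₀ hbnn hbase j
  have hub : (n.choose j : ℝ) * ((q : ℝ) ^ 2 - 1) ^ j ≤
      ((n : ℝ) * Real.exp 1 / j * (((q : ℝ) + 1) * ((q : ℝ) - 1))) ^ j := by
    have h1 : ((q : ℝ) ^ 2 - 1) = ((q : ℝ) + 1) * ((q : ℝ) - 1) := by ring
    rw [h1]
    refine le_trans (mul_le_mul_of_nonneg_right (aux_choose_le n j hj)
      (pow_nonneg (by nlinarith) j)) ?_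
    rw [← mul_pow]
  have hlb : (((n : ℝ) - k₁) / j * (((k : ℝ) + k₁) / j) * (((q : ℝ) - 1) * ((q : ℝ) - 1))) ^ j ≤
      ((n - k₁).choose j : ℝ) * ((k + k₁).choose j : ℝ) * ((q : ℝ) - 1) ^ (2 * j) := by
    rw [mul_pow, mul_pow]
    have e1 : (((q : ℝ) - 1) * ((q : ℝ) - 1)) ^ j = ((q : ℝ) - 1) ^ (2 * j) := by
      rw [← sq, ← pow_mul]
    rw [e1]
    apply mul_le_mul_of_nonneg_right _ (by positivity)
    have heq2 : ((k : ℝ) + k₁) = ((k + k₁ : ℕ) : ℝ) := by push_cast; ring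
    have b1 : (((n : ℝ) - k₁) / j) ^ j ≤ ((n - k₁).choose j : ℝ) := by
      rw [← hcast]; exact aux_pow_le_choose _ j (by omega)
    have b2 : (((k : ℝ) + k₁) / j) ^ j ≤ ((k + k₁).choose j : ℝ) := by
      rw [heq2]; exact aux_pow_le_choose _ j hj2
    have nn1 : (0:ℝ) ≤ (((n : ℝ) - k₁) / j) ^ j := by rw [← hcast]; positivity
    have nn2 : (0:ℝ) ≤ (((k : ℝ) + k₁) / j) ^ j := by rw [heq2]; positivity
    exact mul_le_mul b1 b2 nn2 (by positivity)
  linarith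
end
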